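/- arXiv:1511.06521 — 3 statements merged into one kernel-verified Lean document; each statement's English description precedes it below -/
import Mathlib

section
/- Let α ≥ 1. The function g : [0,∞) → ℝ defined by g(t) = t²/(1+t) · (ln(1+t))^α is convex on [0,∞). -/
/-!
Writing `L = log (1 + t)`, the derivative of `g` is
`g' t = (1 - (1 + t)⁻²) · L ^ α + α · (t / (1 + t))² · L ^ (α - 1)`.
For `α ≥ 1` every factor is nonnegative and nondecreasing on `[0, ∞)`, so `g'` is nondecreasing
there and `g` is convex.
-/

open Real Set

theorem convexOn_of_hasDerivAt_of_monotoneOn {D : Set ℝ} (hD : Convex ℝ D) {f f' : ℝ → ℝ}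
    (hf : ∀ x ∈ D, HasDerivAt f (f' x) x) (hf' : MonotoneOn f' D) : ConvexOn ℝ D f := by
  refine MonotoneOn.convexOn_of_deriv hD (fun x hx ↦ (hf x hx).continuousAt.continuousWithinAt)
    (fun x hx ↦ (hf x (interior_subset hx)).differentiableAt.differentiableWithinAt) ?_
  exact (hf'.mono interior_subset).congr fun x hx ↦ ((hf x (interior_subset hx)).deriv).symm

lemma hasDerivAt_sq_div_one_add {t : ℝ} (ht : -1 < t) :
    HasDerivAt (fun t : ℝ ↦ t ^ 2 / (1 + t)) (1 - ((1 + t) ^ 2)⁻¹) t := by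
  have hne : 1 + t ≠ 0 := by linarith
  refine ((hasDerivAt_pow 2 t).div ((hasDerivAt_id' t).const_add 1) hne).congr_deriv ?_
  field_simp
  ring

lemma hasDerivAt_log_one_add_rpow {α t : ℝ} (hα : 1 ≤ α) (ht : -1 < t) :
    HasDerivAt (fun t : ℝ ↦ log (1 + t) ^ α) (α * log (1 + t) ^ (α - 1) / (1 + t)) t := by
  have hlog := ((hasDerivAt_id' t).const_add 1).log (by linarith)
  convert hlog.rpow_const (Or.inr hα) using 1
  ring

lemma log_one_add_rpow_nonneg (p : ℝ) {t : ℝ} (ht : t ∈ Ici 0) : 0 ≤ log (1 + t) ^ p :=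
  rpow_nonneg (log_nonneg (by simp only [mem_Ici] at ht; linarith)) p

lemma one_sub_inv_one_add_sq_nonneg {t : ℝ} (ht : t ∈ Ici 0) : 0 ≤ 1 - ((1 + t) ^ 2)⁻¹ := by
  simp only [mem_Ici] at ht
  exact sub_nonneg.2 (inv_le_one_of_one_le₀ (one_le_pow₀ (by linarith)))

lemma monotoneOn_log_one_add_rpow {p : ℝ} (hp : 0 ≤ p) :
    MonotoneOn (fun t : ℝ ↦ log (1 + t) ^ p) (Ici 0) := fun s hs _ _ hst ↦ by
  simp only [mem_Ici] at hs
  exact rpow_le_rpow (log_nonneg (by linarith)) (log_le_log (by linarith) (by linarith)) hp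

lemma monotoneOn_one_sub_inv_one_add_sq :
    MonotoneOn (fun t : ℝ ↦ 1 - ((1 + t) ^ 2)⁻¹) (Ici 0) := fun s hs _ _ hst ↦ by
  simp only [mem_Ici] at hs
  exact sub_le_sub_left (inv_anti₀ (by positivity) (by gcongr)) 1

lemma monotoneOn_div_one_add_sq :
    MonotoneOn (fun t : ℝ ↦ (t / (1 + t)) ^ 2) (Ici 0) := fun s hs t ht hst ↦ by
  simp only [mem_Ici] at hs ht
  refine pow_le_pow_left₀ (by positivity) ?_ 2
  rw [div_le_div_iff₀ (by linarith) (by linarith)]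
  linarith

/-- For `α ≥ 1`, the function `g(t) = t²/(1+t) · (log(1+t))^α` is convex on `[0,∞)`. -/
theorem stmt_1 (α : ℝ) (hα : 1 ≤ α) :
    ConvexOn ℝ (Set.Ici (0 : ℝ))
      (fun t : ℝ => t ^ 2 / (1 + t) * Real.log (1 + t) ^ α) := by
  have hmono₁ := monotoneOn_one_sub_inv_one_add_sq.mul
    (monotoneOn_log_one_add_rpow (by linarith : 0 ≤ α))
    (fun _ ↦ one_sub_inv_one_add_sq_nonneg) (fun _ ↦ log_one_add_rpow_nonneg α)
  have hmono₂ := monotoneOn_div_one_add_sq.mul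
    (monotoneOn_log_one_add_rpow (by linarith : 0 ≤ α - 1))
    (fun t _ ↦ sq_nonneg (t / (1 + t))) (fun _ ↦ log_one_add_rpow_nonneg (α - 1))
  refine convexOn_of_hasDerivAt_of_monotoneOn (convex_Ici 0)
    (f' := fun t ↦ (1 - ((1 + t) ^ 2)⁻¹) * log (1 + t) ^ α
      + α * ((t / (1 + t)) ^ 2 * log (1 + t) ^ (α - 1))) (fun t ht ↦ ?_)
    (hmono₁.add fun s hs t ht hst ↦ mul_le_mul_of_nonneg_left (hmono₂ hs ht hst) (by linarith))
  have ht : -1 < t := by simp only [mem_Ici] at ht; linarith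
  refine ((hasDerivAt_sq_div_one_add ht).mul (hasDerivAt_log_one_add_rpow hα ht)).congr_deriv ?_
  ring
end

section
/- Let Ω ⊂ ℝ³ be a bounded measurable set, and let (ρ_n) ⊂ L¹(Ω) be a sequence of measurable functions. Let P, G : ℝ → ℝ be continuous nondecreasing functions. Suppose P(ρ_n) ⇀ p̄, G(ρ_n) ⇀ ḡ, and P(ρ_n)G(ρ_n) ⇀ h̄ weakly in L¹(Ω). Then p̄(x)·ḡ(x) ≤ h̄(x) for a.e. x ∈ Ω. -/
open Set Filter Topology MeasureTheory

/-!
For every constant `c`, monotonicity makes `(P ρₙ - P c) (G ρₙ - G c) ≥ 0`, and in the weak limit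
this says `p̄ ḡ - h̄ ≤ (p̄ - P c) (ḡ - G c)` a.e.; testing only rational `c` keeps the exceptional
set null, and continuity of `P`, `G` extends the bound to all real `c`. Weak limits also keep `p̄`
between `inf P` and `sup P`, and `ḡ` between `inf G` and `sup G`. As the range of `P` is an
interval, either `p̄ x = P c` for some `c`, which kills the right-hand side, or `p̄ x` is an
unattained endpoint, say `sup P`; then either some `c` has `ḡ x ≤ G c`, making the right-hand
side nonpositive, or `G < ḡ x` everywhere and both factors tend to `0` as `c → ∞`.
-/

section MonotonePair

variable {P G : ℝ → ℝ} {p g a : ℝ}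

lemma le_zero_of_isLUB_range (hPm : Monotone P) (hGm : Monotone G) (hp : IsLUB (range P) p)
    (hg : g ∈ lowerBounds (upperBounds (range G))) (h : ∀ c, a ≤ (p - P c) * (g - G c)) :
    a ≤ 0 := by
  by_cases hG : ∃ c, g ≤ G c
  · obtain ⟨c, hc⟩ := hG
    exact (h c).trans <|
      mul_nonpos_of_nonneg_of_nonpos (sub_nonneg.2 (hp.1 ⟨c, rfl⟩)) (sub_nonpos.2 hc)
  · push Not at hG
    have hg' : IsLUB (range G) g := ⟨forall_mem_range.2 fun c => (hG c).le, hg⟩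
    have hlim : Tendsto (fun c => (p - P c) * (g - G c)) atTop (𝓝 ((p - p) * (g - g))) :=
      ((tendsto_atTop_isLUB hPm hp).const_sub p).mul
        ((tendsto_atTop_isLUB hGm hg').const_sub g)
    simpa using ge_of_tendsto' hlim h

lemma le_zero_of_isGLB_range (hPm : Monotone P) (hGm : Monotone G) (hp : IsGLB (range P) p)
    (hg : g ∈ upperBounds (lowerBounds (range G))) (h : ∀ c, a ≤ (p - P c) * (g - G c)) :
    a ≤ 0 := by
  have hrange : ∀ F : ℝ → ℝ, range (fun t => -F (-t)) = -range F := fun F => by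
    ext y
    simp only [mem_range, Set.mem_neg, neg_eq_iff_eq_neg]
    exact ⟨fun ⟨t, ht⟩ => ⟨-t, ht⟩, fun ⟨t, ht⟩ => ⟨-t, by rwa [neg_neg]⟩⟩
  refine le_zero_of_isLUB_range (P := fun t => -P (-t)) (G := fun t => -G (-t)) (p := -p)
    (g := -g) (fun s t hst => neg_le_neg (hPm (neg_le_neg hst)))
    (fun s t hst => neg_le_neg (hGm (neg_le_neg hst))) ?_ ?_ fun c => ?_
  · rw [hrange]; exact isLUB_neg'.2 hp
  · intro b hb
    have : -b ∈ lowerBounds (range G) := by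
      rintro _ ⟨t, rfl⟩
      have := hb ⟨-t, rfl⟩
      simp only [neg_neg] at this
      linarith
    linarith [hg this]
  · convert h (-c) using 1
    ring

lemma le_zero_of_forall_le_sub_mul_sub (hPc : Continuous P) (hPm : Monotone P)
    (hGm : Monotone G) (hp₁ : p ∈ lowerBounds (upperBounds (range P)))
    (hp₂ : p ∈ upperBounds (lowerBounds (range P)))
    (hg₁ : g ∈ lowerBounds (upperBounds (range G)))
    (hg₂ : g ∈ upperBounds (lowerBounds (range G)))
    (h : ∀ c, a ≤ (p - P c) * (g - G c)) : a ≤ 0 := by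
  by_cases hmem : p ∈ range P
  · obtain ⟨c, rfl⟩ := hmem
    simpa using h c
  have hside : p ∈ upperBounds (range P) ∨ p ∈ lowerBounds (range P) := by
    simp only [mem_upperBounds, mem_lowerBounds, forall_mem_range]
    by_contra! ⟨⟨s, hs⟩, ⟨t, ht⟩⟩
    exact hmem <| (isPreconnected_range hPc).ordConnected.out ⟨t, rfl⟩ ⟨s, rfl⟩ ⟨ht.le, hs.le⟩
  rcases hside with hub | hlb
  · exact le_zero_of_isLUB_range hPm hGm ⟨hub, hp₁⟩ hg₁ h
  · exact le_zero_of_isGLB_range hPm hGm ⟨hlb, hp₂⟩ hg₂ h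

end MonotonePair

def WeakTendsto {α : Type*} [MeasurableSpace α] (μ : Measure α) (F : ℕ → α → ℝ)
    (f : α → ℝ) : Prop :=
  ∀ φ : α → ℝ, Measurable φ → (∃ M, ∀ x, |φ x| ≤ M) →
    Tendsto (fun n => ∫ x, F n x * φ x ∂μ) atTop (𝓝 (∫ x, f x * φ x ∂μ))

namespace WeakTendsto

variable {α : Type*} [MeasurableSpace α] {μ : Measure α} {F F' : ℕ → α → ℝ} {f f' : α → ℝ}

lemma const (c : ℝ) : WeakTendsto μ (fun _ _ => c) (fun _ => c) :=
  fun _ _ _ => tendsto_const_nhds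

lemma const_mul (h : WeakTendsto μ F f) (c : ℝ) :
    WeakTendsto μ (fun n x => c * F n x) (fun x => c * f x) := fun φ hφ hM => by
  simp only [mul_assoc, integral_const_mul]
  exact (h φ hφ hM).const_mul c

lemma add (h : WeakTendsto μ F f) (h' : WeakTendsto μ F' f') (hF : ∀ n, Integrable (F n) μ)
    (hF' : ∀ n, Integrable (F' n) μ) (hf : Integrable f μ) (hf' : Integrable f' μ) :
    WeakTendsto μ (fun n x => F n x + F' n x) (fun x => f x + f' x) := by
  rintro φ hφ ⟨M, hM⟩
  have hint : ∀ {u : α → ℝ}, Integrable u μ → Integrable (fun x => u x * φ x) μ := fun hu =>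
    hu.mul_bdd hφ.aestronglyMeasurable (.of_forall fun x => (Real.norm_eq_abs _).trans_le (hM x))
  simp only [add_mul]
  rw [integral_add (hint hf) (hint hf')]
  refine ((h φ hφ ⟨M, hM⟩).add (h' φ hφ ⟨M, hM⟩)).congr fun n => ?_
  rw [integral_add (hint (hF n)) (hint (hF' n))]

lemma tendsto_setIntegral (h : WeakTendsto μ F f) {s : Set α} (hs : MeasurableSet s) :
    Tendsto (fun n => ∫ x in s, F n x ∂μ) atTop (𝓝 (∫ x in s, f x ∂μ)) := by
  have hind : ∀ u : α → ℝ, ∫ x, u x * s.indicator 1 x ∂μ = ∫ x in s, u x ∂μ := fun u => by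
    rw [← integral_indicator hs]
    congr 1 with x
    by_cases hx : x ∈ s <;> simp [hx]
  simpa only [hind] using h _ (measurable_one.indicator hs)
    ⟨1, fun x => by by_cases hx : x ∈ s <;> simp [hx]⟩

lemma ae_nonneg (h : WeakTendsto μ F f) (hf : Integrable f μ) (hF : ∀ n x, 0 ≤ F n x) :
    0 ≤ᵐ[μ] f :=
  ae_nonneg_of_forall_setIntegral_nonneg hf fun _ hs _ =>
    ge_of_tendsto' (h.tendsto_setIntegral hs) fun n => integral_nonneg (hF n)

variable [IsFiniteMeasure μ]

lemma ae_le (h : WeakTendsto μ F f) (hF : ∀ n, Integrable (F n) μ) (hf : Integrable f μ)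
    {b : ℝ} (hb : ∀ n x, F n x ≤ b) : ∀ᵐ x ∂μ, f x ≤ b := by
  have hsub := ((const b).add (h.const_mul (-1)) (by fun_prop) (by fun_prop) (by fun_prop)
    (by fun_prop)).ae_nonneg (by fun_prop) fun n x => by linarith [hb n x]
  filter_upwards [hsub] with x hx
  simp only [Pi.zero_apply] at hx
  linarith

lemma ae_ge (h : WeakTendsto μ F f) (hF : ∀ n, Integrable (F n) μ) (hf : Integrable f μ)
    {b : ℝ} (hb : ∀ n x, b ≤ F n x) : ∀ᵐ x ∂μ, b ≤ f x := by
  filter_upwards [(h.const_mul (-1)).ae_le (by fun_prop) (by fun_prop) (b := -b)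
    fun n x => by linarith [hb n x]] with x hx
  linarith

lemma ae_mem_lowerBounds_upperBounds (h : WeakTendsto μ F f) (hF : ∀ n, Integrable (F n) μ)
    (hf : Integrable f μ) {S : Set ℝ} (hS : S.Nonempty) (hFS : ∀ n x, F n x ∈ S) :
    ∀ᵐ x ∂μ, f x ∈ lowerBounds (upperBounds S) := by
  by_cases hbdd : BddAbove S
  · filter_upwards [h.ae_le hF hf fun n x => le_csSup hbdd (hFS n x)] with x hx
    exact fun b hb => hx.trans (csSup_le hS hb)
  · simp [not_nonempty_iff_eq_empty.1 hbdd]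

lemma ae_mem_upperBounds_lowerBounds (h : WeakTendsto μ F f) (hF : ∀ n, Integrable (F n) μ)
    (hf : Integrable f μ) {S : Set ℝ} (hS : S.Nonempty) (hFS : ∀ n x, F n x ∈ S) :
    ∀ᵐ x ∂μ, f x ∈ upperBounds (lowerBounds S) := by
  by_cases hbdd : BddBelow S
  · filter_upwards [h.ae_ge hF hf fun n x => csInf_le hbdd (hFS n x)] with x hx
    exact fun b hb => (le_csInf hS hb).trans hx
  · simp [not_nonempty_iff_eq_empty.1 hbdd]

lemma sub_mul_sub {U V : ℕ → α → ℝ} {u v w : α → ℝ} (hU : WeakTendsto μ U u)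
    (hV : WeakTendsto μ V v) (hUV : WeakTendsto μ (fun n x => U n x * V n x) w)
    (hUi : ∀ n, Integrable (U n) μ) (hVi : ∀ n, Integrable (V n) μ)
    (hUVi : ∀ n, Integrable (fun x => U n x * V n x) μ) (hu : Integrable u μ)
    (hv : Integrable v μ) (hw : Integrable w μ) (a b : ℝ) :
    WeakTendsto μ (fun n x => (U n x - a) * (V n x - b))
      (fun x => w x - a * v x - b * u x + a * b) := by
  have H := ((hUV.add (hV.const_mul (-a)) ?_ ?_ ?_ ?_).add (hU.const_mul (-b)) ?_ ?_ ?_ ?_).add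
    (const (a * b)) ?_ ?_ ?_ ?_
  · convert H using 1 <;> ext <;> ring
  all_goals fun_prop

end WeakTendsto

theorem stmt_8_general (Ω : Set (EuclideanSpace ℝ (Fin 3)))
    (hΩb : Bornology.IsBounded Ω)
    (ρ : ℕ → EuclideanSpace ℝ (Fin 3) → ℝ)
    (P G : ℝ → ℝ) (hPc : Continuous P) (hPm : Monotone P)
    (hGc : Continuous G) (hGm : Monotone G)
    (pbar gbar hbar : EuclideanSpace ℝ (Fin 3) → ℝ)
    (hint : ∀ n, Integrable (fun x => P (ρ n x)) (volume.restrict Ω) ∧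
        Integrable (fun x => G (ρ n x)) (volume.restrict Ω) ∧
        Integrable (fun x => P (ρ n x) * G (ρ n x)) (volume.restrict Ω))
    (hpbar : Integrable pbar (volume.restrict Ω))
    (hgbar : Integrable gbar (volume.restrict Ω))
    (hhbar : Integrable hbar (volume.restrict Ω))
    (hPw : ∀ φ : EuclideanSpace ℝ (Fin 3) → ℝ, Measurable φ → (∃ M, ∀ x, |φ x| ≤ M) →
      Filter.Tendsto (fun n => ∫ x, P (ρ n x) * φ x ∂(volume.restrict Ω)) Filter.atTop
        (nhds (∫ x, pbar x * φ x ∂(volume.restrict Ω))))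
    (hGw : ∀ φ : EuclideanSpace ℝ (Fin 3) → ℝ, Measurable φ → (∃ M, ∀ x, |φ x| ≤ M) →
      Filter.Tendsto (fun n => ∫ x, G (ρ n x) * φ x ∂(volume.restrict Ω)) Filter.atTop
        (nhds (∫ x, gbar x * φ x ∂(volume.restrict Ω))))
    (hPGw : ∀ φ : EuclideanSpace ℝ (Fin 3) → ℝ, Measurable φ → (∃ M, ∀ x, |φ x| ≤ M) →
      Filter.Tendsto (fun n => ∫ x, P (ρ n x) * G (ρ n x) * φ x ∂(volume.restrict Ω))
        Filter.atTop (nhds (∫ x, hbar x * φ x ∂(volume.restrict Ω)))) :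
    ∀ᵐ x ∂(volume.restrict Ω), pbar x * gbar x ≤ hbar x := by
  have : IsFiniteMeasure (volume.restrict Ω) :=
    isFiniteMeasure_restrict.2 hΩb.measure_lt_top.ne
  have hPi n := (hint n).1
  have hGi n := (hint n).2.1
  have hprod (c : ℝ) : ∀ᵐ x ∂(volume.restrict Ω),
      0 ≤ hbar x - P c * gbar x - G c * pbar x + P c * G c :=
    (WeakTendsto.sub_mul_sub hPw hGw hPGw hPi hGi (fun n => (hint n).2.2) hpbar hgbar hhbar
      (P c) (G c)).ae_nonneg (by fun_prop)
      fun n x => (hPm.monovary hGm).sub_mul_sub_nonneg c (ρ n x)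
  have hPrange n x : P (ρ n x) ∈ range P := mem_range_self _
  have hGrange n x : G (ρ n x) ∈ range G := mem_range_self _
  filter_upwards [ae_all_iff.2 fun q : ℚ => hprod q,
    WeakTendsto.ae_mem_lowerBounds_upperBounds hPw hPi hpbar (range_nonempty P) hPrange,
    WeakTendsto.ae_mem_upperBounds_lowerBounds hPw hPi hpbar (range_nonempty P) hPrange,
    WeakTendsto.ae_mem_lowerBounds_upperBounds hGw hGi hgbar (range_nonempty G) hGrange,
    WeakTendsto.ae_mem_upperBounds_lowerBounds hGw hGi hgbar (range_nonempty G) hGrange]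
    with x hq hp₁ hp₂ hg₁ hg₂
  have hall (c : ℝ) : pbar x * gbar x - hbar x ≤ (pbar x - P c) * (gbar x - G c) :=
    Rat.denseRange_cast.induction_on c (isClosed_le (by fun_prop) (by fun_prop))
      fun q => by linarith [hq q]
  linarith [le_zero_of_forall_le_sub_mul_sub hPc hPm hGm hp₁ hp₂ hg₁ hg₂ hall]

/-- Weak limits of products of monotone functions dominate the product of weak limits:
if `P(ρ_n) ⇀ p̄`, `G(ρ_n) ⇀ ḡ` and `P(ρ_n)G(ρ_n) ⇀ h̄` weakly in `L¹(Ω)` (i.e. tested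
against bounded measurable functions), with `P, G` continuous and nondecreasing, then
`p̄ ḡ ≤ h̄` a.e. in `Ω`. -/
theorem stmt_8 (Ω : Set (EuclideanSpace ℝ (Fin 3)))
    (hΩm : MeasurableSet Ω) (hΩb : Bornology.IsBounded Ω)
    (ρ : ℕ → EuclideanSpace ℝ (Fin 3) → ℝ)
    (hρ : ∀ n, Integrable (ρ n) (volume.restrict Ω))
    (P G : ℝ → ℝ) (hPc : Continuous P) (hPm : Monotone P)
    (hGc : Continuous G) (hGm : Monotone G)
    (pbar gbar hbar : EuclideanSpace ℝ (Fin 3) → ℝ)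
    (hint : ∀ n, Integrable (fun x => P (ρ n x)) (volume.restrict Ω) ∧
        Integrable (fun x => G (ρ n x)) (volume.restrict Ω) ∧
        Integrable (fun x => P (ρ n x) * G (ρ n x)) (volume.restrict Ω))
    (hpbar : Integrable pbar (volume.restrict Ω))
    (hgbar : Integrable gbar (volume.restrict Ω))
    (hhbar : Integrable hbar (volume.restrict Ω))
    (hPw : ∀ φ : EuclideanSpace ℝ (Fin 3) → ℝ, Measurable φ → (∃ M, ∀ x, |φ x| ≤ M) →
      Filter.Tendsto (fun n => ∫ x, P (ρ n x) * φ x ∂(volume.restrict Ω)) Filter.atTop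
        (nhds (∫ x, pbar x * φ x ∂(volume.restrict Ω))))
    (hGw : ∀ φ : EuclideanSpace ℝ (Fin 3) → ℝ, Measurable φ → (∃ M, ∀ x, |φ x| ≤ M) →
      Filter.Tendsto (fun n => ∫ x, G (ρ n x) * φ x ∂(volume.restrict Ω)) Filter.atTop
        (nhds (∫ x, gbar x * φ x ∂(volume.restrict Ω))))
    (hPGw : ∀ φ : EuclideanSpace ℝ (Fin 3) → ℝ, Measurable φ → (∃ M, ∀ x, |φ x| ≤ M) →
      Filter.Tendsto (fun n => ∫ x, P (ρ n x) * G (ρ n x) * φ x ∂(volume.restrict Ω))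
        Filter.atTop (nhds (∫ x, hbar x * φ x ∂(volume.restrict Ω)))) :
    ∀ᵐ x ∂(volume.restrict Ω), pbar x * gbar x ≤ hbar x :=
  stmt_8_general Ω hΩb ρ P G hPc hPm hGc hGm pbar gbar hbar hint hpbar hgbar hhbar hPw hGw hPGw
end

section
/- Let Ω ⊂ ℝ³ be a bounded domain with C² boundary, d(x) = dist(x, ∂Ω), x₀ ∈ ∂Ω, 0 < α < 1, and a = 2/(2−α). Define φ(x) = d(x)∇d(x)·(d(x) + |x−x₀|^a)^{−α} on a neighborhood of ∂Ω where d is C². Then the divergence of φ satisfies div φ(x) ≥ C₁ |∇d(x)|²/(d(x)+|x−x₀|^a)^α − C₂ for positive constants C₁, C₂ depending only on α and bounds for d in C²; in particular the fourth (negative) term −α²d²|∇|x−x₀|^a|²/(2(d+|x−x₀|^a)^{1+α}((1−α)d + |x−x₀|^a)) in the formula for div φ is dominated by the sum of the positive terms. -/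
/-!
Write `B = d + |x - x₀|^a` and `s = d B^{-α}`, so that `φ = s ∇d` and
`div φ = s Δd + ∇s·∇d`, where
`∇s·∇d = B^{-α}|∇d|² - α d B^{-α-1} (|∇d|² + ∇(|x-x₀|^a)·∇d)`.
Since `d ≤ B`, the first two terms give at least `(1-α) B^{-α}|∇d|²`. The cross term is at
most `α a d |x-x₀|^{a-1} B^{-α-1} |∇d|`, and the choice `a = 2/(2-α)`, which makes
`|x-x₀|^{a-1} = (|x-x₀|^a)^{α/2}`, gives `d |x-x₀|^{a-1} ≤ B^{1+α/2}`; so the cross term is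
at most `α a B^{-α/2}|∇d|`, which Young's inequality absorbs into half of the principal term.
Finally `s Δd` is bounded because `d B^{-α} ≤ max d 1`.
-/

open Real

section Divergence

variable {n : ℕ}

noncomputable def divergence (V : EuclideanSpace ℝ (Fin n) → EuclideanSpace ℝ (Fin n))
    (x : EuclideanSpace ℝ (Fin n)) : ℝ :=
  ∑ i, fderiv ℝ V x (EuclideanSpace.single i 1) i

theorem ContinuousLinearMap.sum_apply_single_mul (L : EuclideanSpace ℝ (Fin n) →L[ℝ] ℝ)
    (v : EuclideanSpace ℝ (Fin n)) :
    ∑ i, L (EuclideanSpace.single i 1) * v i = L v := by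
  conv_rhs => rw [← (EuclideanSpace.basisFun (Fin n) ℝ).sum_repr v]
  simp [map_sum, mul_comm]

theorem divergence_smul {f : EuclideanSpace ℝ (Fin n) → ℝ}
    {V : EuclideanSpace ℝ (Fin n) → EuclideanSpace ℝ (Fin n)} {x : EuclideanSpace ℝ (Fin n)}
    (hf : DifferentiableAt ℝ f x) (hV : DifferentiableAt ℝ V x) :
    divergence (fun y => f y • V y) x = f x * divergence V x + fderiv ℝ f x (V x) := by
  have hfV : HasFDerivAt (fun y => f y • V y) _ x := hf.hasFDerivAt.smul hV.hasFDerivAt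
  rw [divergence, hfV.fderiv, divergence,
    ← (fderiv ℝ f x).sum_apply_single_mul, Finset.mul_sum, ← Finset.sum_add_distrib]
  simp

theorem abs_divergence_le (V : EuclideanSpace ℝ (Fin n) → EuclideanSpace ℝ (Fin n))
    (x : EuclideanSpace ℝ (Fin n)) : |divergence V x| ≤ n * ‖fderiv ℝ V x‖ := by
  calc |divergence V x| ≤ ∑ i, |fderiv ℝ V x (EuclideanSpace.single i 1) i| :=
        Finset.abs_sum_le_sum_abs _ _
    _ ≤ ∑ _i : Fin n, ‖fderiv ℝ V x‖ := by
        gcongr with i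
        calc |fderiv ℝ V x (EuclideanSpace.single i 1) i|
            ≤ ‖fderiv ℝ V x (EuclideanSpace.single i 1)‖ := by
              simpa using PiLp.norm_apply_le (fderiv ℝ V x (EuclideanSpace.single i 1)) i
          _ ≤ ‖fderiv ℝ V x‖ * ‖EuclideanSpace.single i (1 : ℝ)‖ :=
              (fderiv ℝ V x).le_opNorm _
          _ = ‖fderiv ℝ V x‖ := by simp
    _ = n * ‖fderiv ℝ V x‖ := by simp

end Divergence

section Gradient

variable {F : Type*} [NormedAddCommGroup F] [InnerProductSpace ℝ F] [CompleteSpace F]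
  {f : F → ℝ} {x : F}

theorem fderiv_apply_gradient : fderiv ℝ f x (gradient f x) = ‖gradient f x‖ ^ 2 := by
  rw [← inner_gradient_left, real_inner_self_eq_norm_sq]

theorem ContDiffAt.differentiableAt_gradient (hf : ContDiffAt ℝ 2 f x) :
    DifferentiableAt ℝ (gradient f) x :=
  (InnerProductSpace.toDual ℝ F).symm.differentiableAt.comp x
    ((hf.fderiv_right (m := 1) (by norm_num)).differentiableAt (by norm_num))

end Gradient

theorem HasFDerivAt.mul_add_rpow_neg {E : Type*} [NormedAddCommGroup E] [NormedSpace ℝ E]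
    {f p : E → ℝ} {f' p' : E →L[ℝ] ℝ} {x : E} (hf : HasFDerivAt f f' x)
    (hp : HasFDerivAt p p' x) (hB : 0 < f x + p x) (α : ℝ) :
    HasFDerivAt (fun y => f y * (f y + p y) ^ (-α))
      ((f x + p x) ^ (-α) • f' - (α * f x * (f x + p x) ^ (-α - 1)) • (f' + p')) x := by
  have h : HasFDerivAt (fun y => f y * (f y + p y) ^ (-α)) _ x :=
    hf.mul ((hf.add hp).rpow_const (p := -α) (Or.inl hB.ne'))
  refine h.congr_fderiv ?_
  ext v
  simp
  ring

theorem hasFDerivAt_norm_sub_rpow {E : Type*} [NormedAddCommGroup E] [InnerProductSpace ℝ E]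
    (x x₀ : E) {a : ℝ} (ha : 1 < a) :
    HasFDerivAt (fun y => ‖y - x₀‖ ^ a)
      (fderiv ℝ (fun z : E => ‖z‖ ^ a) (x - x₀)) x :=
  ((differentiable_norm_rpow ha).differentiableAt.hasFDerivAt).comp x
    (hasFDerivAt_sub_const x₀)

theorem mul_le_mul_sq_add_sq_div {e k u : ℝ} (he : 0 < e) :
    k * u ≤ e * u ^ 2 + k ^ 2 / (4 * e) := by
  rw [← sub_nonneg]
  have : e * u ^ 2 + k ^ 2 / (4 * e) - k * u = (2 * e * u - k) ^ 2 / (4 * e) := by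
    field_simp; ring
  rw [this]; positivity

theorem one_sub_mul_rpow_neg_le {α D B : ℝ} (hα : 0 ≤ α) (hD : D ≤ B) (hB : 0 < B) :
    (1 - α) * B ^ (-α) ≤ B ^ (-α) - α * D * B ^ (-α - 1) := by
  have hsplit : B ^ (-α) = B * B ^ (-α - 1) := by
    rw [mul_comm, ← rpow_add_one hB.ne']; ring_nf
  rw [hsplit]
  nlinarith [mul_nonneg (mul_nonneg hα (sub_nonneg.2 hD)) (rpow_pos_of_pos hB (-α - 1)).le]

theorem mul_rpow_neg_le_max {α D B : ℝ} (hα0 : 0 ≤ α) (hα1 : α ≤ 1) (hD : 0 ≤ D)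
    (hDB : D ≤ B) :
    D * B ^ (-α) ≤ max D 1 := by
  rcases le_or_gt 1 B with hB1 | hB1
  · calc D * B ^ (-α) ≤ D * 1 :=
          mul_le_mul_of_nonneg_left (rpow_le_one_of_one_le_of_nonpos hB1 (by linarith)) hD
      _ ≤ max D 1 := by simp
  · have hB : 0 ≤ B := hD.trans hDB
    calc D * B ^ (-α) ≤ B * B ^ (-α) := mul_le_mul_of_nonneg_right hDB (rpow_nonneg hB _)
      _ ≤ 1 := by
        rcases hB.eq_or_lt with h | h
        · simp [← h]
        · rw [mul_comm, ← rpow_add_one h.ne', neg_add_eq_sub]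
          exact rpow_le_one hB hB1.le (by linarith)
      _ ≤ max D 1 := le_max_right _ _

theorem mul_rpow_sub_one_le_rpow {α a D r : ℝ} (hα : 0 ≤ α) (ha : a * (2 - α) = 2)
    (hD : 0 ≤ D) (hr : 0 ≤ r) :
    D * r ^ (a - 1) ≤ (D + r ^ a) ^ (1 + α / 2) := by
  have hra : 0 ≤ r ^ a := rpow_nonneg hr a
  have hB : 0 ≤ D + r ^ a := by linarith
  have hexp : r ^ (a - 1) = (r ^ a) ^ (α / 2) := by
    rw [← rpow_mul hr]; congr 1; linear_combination (1 / 2 : ℝ) * ha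
  rw [hexp, rpow_add' hB (by positivity), rpow_one]
  exact mul_le_mul (by linarith) (rpow_le_rpow hra (by linarith) (by positivity)) (by positivity) hB

theorem mul_rpow_neg_sub_one_mul_le {α a D r G m : ℝ} (hα0 : 0 < α) (hα1 : α < 1)
    (ha : a * (2 - α) = 2) (hD : 0 ≤ D) (hr : 0 < r) (hG : 0 ≤ G)
    (hm : |m| ≤ a * r ^ (a - 1) * G) :
    α * D * (D + r ^ a) ^ (-α - 1) * |m| ≤
      (1 - α) / 2 * (G ^ 2 * (D + r ^ a) ^ (-α)) + (α * a) ^ 2 / (2 * (1 - α)) := by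
  set B := D + r ^ a
  have hB : 0 < B := by positivity
  have ha0 : 0 < a := by nlinarith
  have hweight : D * r ^ (a - 1) * B ^ (-α - 1) ≤ B ^ (-(α / 2)) := by
    calc D * r ^ (a - 1) * B ^ (-α - 1) ≤ B ^ (1 + α / 2) * B ^ (-α - 1) :=
          mul_le_mul_of_nonneg_right (mul_rpow_sub_one_le_rpow hα0.le ha hD hr.le) (by positivity)
      _ = B ^ (-(α / 2)) := by rw [← rpow_add hB]; ring_nf
  have hsq : G ^ 2 * B ^ (-α) = (G * B ^ (-(α / 2))) ^ 2 := by
    rw [mul_pow, sq (B ^ _), ← rpow_add hB]; ring_nf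
  calc α * D * B ^ (-α - 1) * |m| ≤ α * D * B ^ (-α - 1) * (a * r ^ (a - 1) * G) := by
        gcongr
    _ = (α * a) * (D * r ^ (a - 1) * B ^ (-α - 1)) * G := by ring
    _ ≤ (α * a) * B ^ (-(α / 2)) * G := by gcongr
    _ = (α * a) * (G * B ^ (-(α / 2))) := by ring
    _ ≤ (1 - α) / 2 * (G * B ^ (-(α / 2))) ^ 2 + (α * a) ^ 2 / (4 * ((1 - α) / 2)) :=
        mul_le_mul_sq_add_sq_div (by linarith)
    _ = (1 - α) / 2 * (G ^ 2 * B ^ (-α)) + (α * a) ^ 2 / (2 * (1 - α)) := by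
        rw [hsq]; ring_nf

/-- The right-hand side is `div φ(x)` expanded, with `D = d x`, `r = ‖x - x₀‖`,
`G = ‖∇d x‖`, `m = ∇(r^a)·∇d x` and `Δ = Δd x`. -/
theorem weighted_divergence_lower_bound {α a M K D r G m Δ : ℝ} (hα0 : 0 < α) (hα1 : α < 1)
    (ha : a * (2 - α) = 2) (hD : 0 ≤ D) (hDM : D ≤ M) (hr : 0 < r) (hG : 0 ≤ G)
    (hm : |m| ≤ a * r ^ (a - 1) * G) (hΔ : |Δ| ≤ K) :
    (1 - α) / 2 * G ^ 2 / (D + r ^ a) ^ α - ((α * a) ^ 2 / (2 * (1 - α)) + max M 1 * K) ≤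
      D * (D + r ^ a) ^ (-α) * Δ +
        ((D + r ^ a) ^ (-α) * G ^ 2 - α * D * (D + r ^ a) ^ (-α - 1) * (G ^ 2 + m)) := by
  set B := D + r ^ a
  have hB : 0 < B := by positivity
  have hDB : D ≤ B := le_add_of_nonneg_right (by positivity)
  have hprincipal : (1 - α) * (G ^ 2 * B ^ (-α)) ≤
      B ^ (-α) * G ^ 2 - α * D * B ^ (-α - 1) * G ^ 2 := by
    have := mul_le_mul_of_nonneg_left (one_sub_mul_rpow_neg_le hα0.le hDB hB) (sq_nonneg G)
    linarith
  have hcross : α * D * B ^ (-α - 1) * m ≤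
      (1 - α) / 2 * (G ^ 2 * B ^ (-α)) + (α * a) ^ 2 / (2 * (1 - α)) := by
    refine le_trans ?_ (mul_rpow_neg_sub_one_mul_le hα0 hα1 ha hD hr hG hm)
    exact mul_le_mul_of_nonneg_left (le_abs_self m) (by positivity)
  have hzeroth : -(max M 1 * K) ≤ D * B ^ (-α) * Δ := by
    have hmax : D * B ^ (-α) ≤ max M 1 :=
      (mul_rpow_neg_le_max hα0.le hα1.le hD hDB).trans (max_le_max_right 1 hDM)
    have : |D * B ^ (-α) * Δ| ≤ max M 1 * K := by
      rw [abs_mul, abs_of_nonneg (by positivity)]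
      exact mul_le_mul hmax hΔ (abs_nonneg Δ) (by positivity)
    linarith [neg_abs_le (D * B ^ (-α) * Δ)]
  rw [div_eq_mul_inv, ← rpow_neg hB.le]
  linear_combination hprincipal + hcross + hzeroth

/-- Lower bound for the divergence of the boundary test function
`φ(x) = d(x)∇d(x)(d(x)+|x−x₀|^a)^{−α}`, `a = 2/(2−α)`, `0 < α < 1`:
`div φ ≥ C₁ |∇d|²/(d+|x−x₀|^a)^α − C₂` with constants depending only on `α` and a
`C²` bound `M` for `d`. -/
theorem stmt_14 (α M : ℝ) (hα0 : 0 < α) (hα1 : α < 1) (hM : 0 < M) :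
    ∃ C₁ C₂ : ℝ, 0 < C₁ ∧ 0 < C₂ ∧
      ∀ (d : EuclideanSpace ℝ (Fin 3) → ℝ) (U : Set (EuclideanSpace ℝ (Fin 3)))
        (x₀ : EuclideanSpace ℝ (Fin 3)),
        IsOpen U → ContDiffOn ℝ 2 d U →
        (∀ x ∈ U, 0 ≤ d x) →
        (∀ x ∈ U, d x ≤ M ∧ ‖gradient d x‖ ≤ M ∧ ‖fderiv ℝ (gradient d) x‖ ≤ M) →
        x₀ ∈ closure U → d x₀ = 0 →
        ∀ x ∈ U, x ≠ x₀ →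
          C₁ * ‖gradient d x‖ ^ 2 / (d x + ‖x - x₀‖ ^ (2 / (2 - α))) ^ α - C₂ ≤
            ∑ i : Fin 3,
              fderiv ℝ
                (fun y : EuclideanSpace ℝ (Fin 3) =>
                  (d y * (d y + ‖y - x₀‖ ^ (2 / (2 - α))) ^ (-α)) • gradient d y) x
                (EuclideanSpace.single i 1) i := by
  set a : ℝ := 2 / (2 - α)
  have ha : a * (2 - α) = 2 := div_mul_cancel₀ 2 (by linarith)
  have ha1 : 1 < a := by rw [one_lt_div (by linarith)]; linarith
  refine ⟨(1 - α) / 2, (α * a) ^ 2 / (2 * (1 - α)) + max M 1 * (3 * M), by linarith,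
    add_pos_of_nonneg_of_pos (div_nonneg (sq_nonneg _) (by linarith)) (by positivity), ?_⟩
  intro d U x₀ hU hd hd0 hbound _ _ x hx hxx₀
  obtain ⟨hdM, -, hd2M⟩ := hbound x hx
  have hdx : ContDiffAt ℝ 2 d x := hd.contDiffAt (hU.mem_nhds hx)
  have hr : 0 < ‖x - x₀‖ := norm_pos_iff.2 (sub_ne_zero.2 hxx₀)
  set L := fderiv ℝ (fun z : EuclideanSpace ℝ (Fin 3) => ‖z‖ ^ a) (x - x₀)
  have hs := (hdx.differentiableAt (by norm_num)).hasFDerivAt.mul_add_rpow_neg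
    (hasFDerivAt_norm_sub_rpow x x₀ ha1)
    (add_pos_of_nonneg_of_pos (hd0 x hx) (by positivity)) α
  have hm : |L (gradient d x)| ≤ a * ‖x - x₀‖ ^ (a - 1) * ‖gradient d x‖ := by
    rw [← norm_fderiv_norm_id_rpow (x - x₀) ha1, ← Real.norm_eq_abs]
    exact L.le_opNorm _
  have hΔ : |divergence (gradient d) x| ≤ 3 * M :=
    (abs_divergence_le _ x).trans (by norm_num; exact hd2M)
  change _ ≤ divergence (fun y => _ • gradient d y) x
  rw [divergence_smul hs.differentiableAt hdx.differentiableAt_gradient, hs.fderiv]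
  simp only [sub_apply, smul_apply, add_apply, smul_eq_mul, fderiv_apply_gradient]
  exact weighted_divergence_lower_bound hα0 hα1 ha (hd0 x hx) hdM hr (norm_nonneg _) hm hΔ
end
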